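/- Let 0 < ε < 1, ρ > 0, ρ* = (1 + ε/2)ρ, μ ≤ ερ/6, and let d° satisfy (1−ε/6)d ≤ d° ≤ (1+ε/6)d. For curves P, Q in a metric space, if D_F(P, Q) ≤ ρ then the perceived discrete Fréchet distance D_F°(P^μ, Q) ≤ ρ*. -/

import Mathlib

/-!
Take any walk on `P × Q` and replace each vertex `p_i` by its simplification predecessor, the
last vertex of `P^μ` not after `p_i`. The predecessor index advances by at most one per step, so
after merging repeated lattice points this is a walk on `P^μ × Q`. The arc from the predecessor
to `p_i` stays inside one greedy step, so it has length at most `μ`, and each matched distance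
grows by at most `μ`. Taking the infimum over walks,
`D_F°(P^μ, Q) ≤ (1 + ε/6)(μ + ρ) ≤ (1 + ε/6)² ρ ≤ (1 + ε/2) ρ`, the last step because `ε ≤ 6`.
-/

open scoped BigOperators

namespace Frechet

variable {X : Type*}

/-- A single step of a monotone discrete walk: each coordinate increases by 0 or 1,
and not both stay the same. -/
def IsStep (a b : ℕ × ℕ) : Prop :=
  (b.1 = a.1 ∨ b.1 = a.1 + 1) ∧ (b.2 = a.2 ∨ b.2 = a.2 + 1) ∧ b ≠ a

/-- A monotone discrete walk from (0,0) to (n-1, m-1) in the n × m lattice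
(0-indexed version of a walk from (1,1) to (n,m)). -/
def IsWalk (n m : ℕ) (F : List (ℕ × ℕ)) : Prop :=
  F ≠ [] ∧ F.head? = some (0, 0) ∧ F.getLast? = some (n - 1, m - 1) ∧
    F.Chain' IsStep ∧ ∀ p ∈ F, p.1 < n ∧ p.2 < m

/-- Cost of a walk: the maximum matched distance along it. -/
def walkCost (d : X → X → ℝ) (P Q : ℕ → X) (F : List (ℕ × ℕ)) : ℝ :=
  (F.map fun p => d (P p.1) (Q p.2)).foldr max 0

/-- Discrete Fréchet distance between `P` (first `n` points) and `Q` (first `m` points),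
computed with respect to the distance-like function `d`. -/
noncomputable def dF (d : X → X → ℝ) (P : ℕ → X) (n : ℕ) (Q : ℕ → X) (m : ℕ) : ℝ :=
  sInf {c | ∃ F, IsWalk n m F ∧ walkCost d P Q F = c}

/-- Arc length of the polygonal curve `P` between vertex indices `i` and `j`. -/
def arcLen (d : X → X → ℝ) (P : ℕ → X) (i j : ℕ) : ℝ :=
  ∑ k ∈ Finset.Ico i j, d (P k) (P (k + 1))

/-- `S` is the list of indices of the greedy `μ`-simplification of the curve
`P` with `n` vertices: it starts at vertex `0`, after a vertex `a` the next chosen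
vertex `b` is the first one with arc length `> μ` (unless `b` is the final vertex
`n-1`, which is always appended), and it ends at vertex `n-1`. -/
def IsSimplification (d : X → X → ℝ) (P : ℕ → X) (n : ℕ) (μ : ℝ) (S : List ℕ) : Prop :=
  S.head? = some 0 ∧ S.getLast? = some (n - 1) ∧ S.Pairwise (· < ·) ∧
    (∀ a ∈ S, a < n) ∧
    S.Chain' (fun a b =>
      (∀ j, a < j → j < b → arcLen d P a j ≤ μ) ∧ (b = n - 1 ∨ μ < arcLen d P a b))

/-- The subsequence of `P` selected by the index list `S`, as a curve. -/
def subCurve (P : ℕ → X) (S : List ℕ) : ℕ → X :=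
  fun t => P (S.getD t 0)

/-- Discrete c-packedness of the polygonal curve `P` (first `n` vertices): for every
ball, the total length of the edges of `P` contained in the ball is at most `c`
times the radius. -/
def CPacked (d : X → X → ℝ) (P : ℕ → X) (n : ℕ) (c : ℝ) : Prop :=
  ∀ (x : X) (r : ℝ), 0 ≤ r →
    ∑ k ∈ Finset.range (n - 1),
      (if d (P k) x ≤ r ∧ d (P (k + 1)) x ≤ r then d (P k) (P (k + 1)) else 0) ≤ c * r

/-- Directed discrete Hausdorff distance from `P` (first `n` points) to `Q`
(first `m` points). -/
noncomputable def dirHaus (d : X → X → ℝ) (P : ℕ → X) (n : ℕ) (Q : ℕ → X) (m : ℕ) : ℝ :=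
  sSup {r | ∃ i < n, r = sInf {s | ∃ j < m, s = d (P i) (Q j)}}

/-- Discrete (symmetric) Hausdorff distance. -/
noncomputable def dHaus (d : X → X → ℝ) (P : ℕ → X) (n : ℕ) (Q : ℕ → X) (m : ℕ) : ℝ :=
  max (dirHaus d P n Q m) (dirHaus d Q m P n)

end Frechet

namespace List

variable {α : Type*}

lemma head?_destutter' (R : α → α → Prop) [DecidableRel R] (a : α) (l : List α) :
    (l.destutter' R a).head? = some a := by
  induction l with
  | nil => rfl
  | cons b l ih =>
    rw [destutter'_cons]
    split_ifs
    · rfl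
    · exact ih

lemma head?_destutter (R : α → α → Prop) [DecidableRel R] (l : List α) :
    (l.destutter R).head? = l.head? := by
  cases l with
  | nil => rfl
  | cons a l => exact head?_destutter' R a l

lemma getD_length_sub_one {l : List α} {a : α} (h : l.getLast? = some a) (d : α) :
    l.getD (l.length - 1) d = a := by
  rw [getD_eq_getElem?_getD, ← getLast?_eq_getElem?, h, Option.getD_some]

variable [DecidableEq α]

lemma getLast?_destutter'_ne (a : α) (l : List α) :
    (l.destutter' (· ≠ ·) a).getLast? = (a :: l).getLast? := by
  induction l generalizing a with
  | nil => rfl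
  | cons b l ih =>
    by_cases hab : a = b
    · subst hab
      rw [destutter'_cons_neg l (not_not.2 rfl), ih, getLast?_cons_cons]
    · rw [destutter'_cons_pos l hab, getLast?_cons, ih, ← getLast?_cons]

lemma getLast?_destutter_ne (l : List α) : (l.destutter (· ≠ ·)).getLast? = l.getLast? := by
  cases l with
  | nil => rfl
  | cons a l => exact getLast?_destutter'_ne a l

lemma isChain_destutter'_ne {R : α → α → Prop} {a : α} {l : List α}
    (h : (a :: l).IsChain fun x y => R x y ∨ y = x) : (l.destutter' (· ≠ ·) a).IsChain R := by
  induction l generalizing a with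
  | nil => exact isChain_singleton a
  | cons b l ih =>
    obtain ⟨hab, hbl⟩ := isChain_cons_cons.1 h
    by_cases hba : a = b
    · subst hba
      rw [destutter'_cons_neg l (not_not.2 rfl)]
      exact ih hbl
    · rw [destutter'_cons_pos l hba, isChain_cons, head?_destutter']
      exact ⟨fun y hy => (Option.mem_some_iff.1 hy) ▸ hab.resolve_right (Ne.symm hba), ih hbl⟩

lemma isChain_destutter_ne {R : α → α → Prop} {l : List α}
    (h : l.IsChain fun x y => R x y ∨ y = x) : (l.destutter (· ≠ ·)).IsChain R := by
  cases l with
  | nil => exact .nil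
  | cons a l => exact isChain_destutter'_ne h

end List

namespace Frechet

variable {X : Type*} {n m : ℕ}

lemma isWalk_destutter {l : List (ℕ × ℕ)} (hne : l ≠ []) (hhead : l.head? = some (0, 0))
    (hlast : l.getLast? = some (n - 1, m - 1))
    (hchain : l.IsChain fun a b => IsStep a b ∨ b = a) (hmem : ∀ p ∈ l, p.1 < n ∧ p.2 < m) :
    IsWalk n m (l.destutter (· ≠ ·)) :=
  ⟨by simpa [List.destutter_eq_nil] using hne, by rw [List.head?_destutter, hhead],
    by rw [List.getLast?_destutter_ne, hlast], List.isChain_destutter_ne hchain,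
    fun p hp => hmem p ((List.destutter_sublist _ l).subset hp)⟩

lemma IsWalk.reindex {F : List (ℕ × ℕ)} {n' : ℕ} {φ : ℕ → ℕ} (hF : IsWalk n m F)
    (h0 : φ 0 = 0) (hlast : φ (n - 1) = n' - 1) (hlt : ∀ i < n, φ i < n')
    (hstep : ∀ i, φ (i + 1) = φ i ∨ φ (i + 1) = φ i + 1) :
    IsWalk n' m ((F.map (Prod.map φ id)).destutter (· ≠ ·)) := by
  obtain ⟨hne, hhead, hFlast, hchain, hmem⟩ := hF
  refine isWalk_destutter (by simpa using hne) (by simp [hhead, h0]) (by simp [hFlast, hlast])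
    (List.isChain_map_of_isChain _ ?_ hchain)
    (List.forall_mem_map.2 fun p hp => ⟨hlt _ (hmem p hp).1, (hmem p hp).2⟩)
  rintro a b ⟨h1, h2, -⟩
  by_cases heq : Prod.map φ id b = Prod.map φ id a
  · exact .inr heq
  · refine .inl ⟨?_, h2, heq⟩
    rcases h1 with h1 | h1
    · exact .inl (by rw [Prod.map_fst, Prod.map_fst, h1])
    · simpa only [Prod.map_fst, h1] using hstep a.1

lemma exists_isWalk (hn : 0 < n) (hm : 0 < m) : ∃ F, IsWalk n m F := by
  obtain ⟨k, hk⟩ : ∃ k, max n m = k + 1 := ⟨max n m - 1, by omega⟩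
  refine ⟨(List.range (max n m)).map fun i => (min i (n - 1), min i (m - 1)),
    by simp [hk], by simp [hk, List.head?_range], ?_, ?_, ?_⟩
  · simp [hk, List.getLast?_range]
    omega
  · simp only [List.Chain', List.isChain_map, List.isChain_range, IsStep, ne_eq, Prod.mk.injEq]
    omega
  · simp only [List.forall_mem_map, List.mem_range]
    omega

lemma walkCost_nonneg (d : X → X → ℝ) (P Q : ℕ → X) (F : List (ℕ × ℕ)) :
    0 ≤ walkCost d P Q F := by
  induction F with
  | nil => exact le_rfl
  | cons p F ih => exact le_max_of_le_right ih

lemma le_walkCost (d : X → X → ℝ) (P Q : ℕ → X) {F : List (ℕ × ℕ)} {p : ℕ × ℕ} (hp : p ∈ F) :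
    d (P p.1) (Q p.2) ≤ walkCost d P Q F :=
  List.le_max_of_le' 0 (List.mem_map_of_mem hp) le_rfl

lemma walkCost_le {d : X → X → ℝ} {P Q : ℕ → X} {F : List (ℕ × ℕ)} {B : ℝ} (hB : 0 ≤ B)
    (h : ∀ p ∈ F, d (P p.1) (Q p.2) ≤ B) : walkCost d P Q F ≤ B := by
  induction F with
  | nil => exact hB
  | cons p F ih =>
    exact max_le (h p List.mem_cons_self) (ih fun q hq => h q (List.mem_cons_of_mem p hq))

lemma dF_le_walkCost (d : X → X → ℝ) (P Q : ℕ → X) {F : List (ℕ × ℕ)} (hF : IsWalk n m F) :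
    dF d P n Q m ≤ walkCost d P Q F :=
  csInf_le ⟨0, by rintro _ ⟨G, -, rfl⟩; exact walkCost_nonneg d P Q G⟩ ⟨F, hF, rfl⟩

lemma le_dF {d : X → X → ℝ} {P Q : ℕ → X} {b : ℝ} (hn : 0 < n) (hm : 0 < m)
    (h : ∀ F, IsWalk n m F → b ≤ walkCost d P Q F) : b ≤ dF d P n Q m := by
  obtain ⟨F, hF⟩ := exists_isWalk hn hm
  exact le_csInf ⟨_, F, hF, rfl⟩ fun _ ⟨G, hG, hc⟩ => hc ▸ h G hG

section PredIdx

variable {S : List ℕ} {i : ℕ}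

-- `P (S.getD (predIdx S i) 0)` is the simplification predecessor `P^μ[a]` of `p_i`.
def predIdx (S : List ℕ) (i : ℕ) : ℕ :=
  Nat.findGreatest (fun a => S.getD a 0 ≤ i) (S.length - 1)

lemma predIdx_lt_length (hS : S ≠ []) (i : ℕ) : predIdx S i < S.length :=
  (Nat.findGreatest_le _).trans_lt (Nat.sub_one_lt (List.length_pos_iff.2 hS).ne')

lemma getD_predIdx_le (h0 : S.head? = some 0) (i : ℕ) : S.getD (predIdx S i) 0 ≤ i :=
  Nat.findGreatest_spec (P := fun a => S.getD a 0 ≤ i) (Nat.zero_le _)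
    (by simp [List.getD_eq_getElem?_getD, ← List.head?_eq_getElem?, h0])

lemma le_predIdx {a : ℕ} (ha : a < S.length) (hai : S.getD a 0 ≤ i) : a ≤ predIdx S i :=
  Nat.le_findGreatest (Nat.le_sub_one_of_lt ha) hai

lemma lt_getD_predIdx_succ (h : predIdx S i + 1 < S.length) :
    i < S.getD (predIdx S i + 1) 0 :=
  lt_of_not_ge fun hle => (le_predIdx h hle).not_gt (Nat.lt_succ_self _)

lemma getD_lt_getD (hS : S.Pairwise (· < ·)) {a b : ℕ} (hab : a < b) (hb : b < S.length) :
    S.getD a 0 < S.getD b 0 := by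
  rw [List.getD_eq_getElem S 0 (hab.trans hb), List.getD_eq_getElem S 0 hb]
  exact List.pairwise_iff_getElem.1 hS a b _ hb hab

lemma predIdx_zero (hS : S.Pairwise (· < ·)) (h0 : S.head? = some 0) : predIdx S 0 = 0 := by
  by_contra hne
  have hlt := getD_lt_getD hS (Nat.pos_of_ne_zero hne)
    (predIdx_lt_length (List.ne_nil_of_mem (List.mem_of_mem_head? h0)) 0)
  have hle := getD_predIdx_le h0 0
  omega

lemma predIdx_of_getLast? {N : ℕ} (hN : S.getLast? = some N) : predIdx S N = S.length - 1 := by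
  have hne : S ≠ [] := by rintro rfl; simp at hN
  exact le_antisymm (Nat.findGreatest_le _) <| le_predIdx
    (Nat.sub_one_lt (List.length_pos_iff.2 hne).ne') (List.getD_length_sub_one hN 0).le

lemma predIdx_succ (hS : S.Pairwise (· < ·)) (h0 : S.head? = some 0) (i : ℕ) :
    predIdx S (i + 1) = predIdx S i ∨ predIdx S (i + 1) = predIdx S i + 1 := by
  have hne := List.ne_nil_of_mem (List.mem_of_mem_head? h0)
  have hlen := predIdx_lt_length hne (i + 1)
  have hmono : predIdx S i ≤ predIdx S (i + 1) :=
    le_predIdx (predIdx_lt_length hne i) ((getD_predIdx_le h0 i).trans i.le_succ)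
  by_contra! hfar
  have hlt := getD_lt_getD hS (show predIdx S i + 1 < predIdx S (i + 1) by omega) hlen
  have hle := getD_predIdx_le h0 (i + 1)
  have hnext := lt_getD_predIdx_succ (show predIdx S i + 1 < S.length by omega)
  omega

end PredIdx

section Simplification

variable [PseudoMetricSpace X] {P Q : ℕ → X} {μ : ℝ} {S : List ℕ}

lemma IsSimplification.pos (hS : IsSimplification dist P n μ S) : 0 < n :=
  hS.2.2.2.1 0 (List.mem_of_mem_head? hS.1)

-- The arc from a simplification vertex to any vertex before the next one has length at most `μ`.
lemma IsSimplification.dist_getD_predIdx_le (hS : IsSimplification dist P n μ S) (hμ : 0 ≤ μ)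
    {i : ℕ} (hi : i < n) : dist (P (S.getD (predIdx S i) 0)) (P i) ≤ μ := by
  obtain ⟨h0, hlast, -, -, hchain⟩ := hS
  have hlt := predIdx_lt_length (List.ne_nil_of_mem (List.mem_of_mem_head? h0)) i
  rcases (getD_predIdx_le h0 i).eq_or_lt with heq | hbefore
  · rw [heq, dist_self]
    exact hμ
  have hnext : predIdx S i + 1 < S.length := by
    by_contra hend
    have hidx : predIdx S i = S.length - 1 := by omega
    rw [hidx, List.getD_length_sub_one hlast] at hbefore
    omega
  have harc := (List.isChain_iff_getElem.1 hchain (predIdx S i) hnext).1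
  rw [← List.getD_eq_getElem S 0, ← List.getD_eq_getElem S 0] at harc
  exact (dist_le_Ico_sum_dist P hbefore.le).trans (harc i hbefore (lt_getD_predIdx_succ hnext))

variable {d' : X → X → ℝ} {K : ℝ}

lemma IsSimplification.dF_le_mul_walkCost (hS : IsSimplification dist P n μ S) (hμ : 0 ≤ μ)
    (hK : 0 ≤ K) (hd' : ∀ x y, d' x y ≤ K * dist x y) {F : List (ℕ × ℕ)} (hF : IsWalk n m F) :
    dF d' (subCurve P S) S.length Q m ≤ K * (μ + walkCost dist P Q F) := by
  have ⟨h0, hlast, hsort, _, _⟩ := hS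
  have hG := hF.reindex (predIdx_zero hsort h0) (predIdx_of_getLast? hlast)
    (fun i _ => predIdx_lt_length (List.ne_nil_of_mem (List.mem_of_mem_head? h0)) i)
    (predIdx_succ hsort h0)
  refine (dF_le_walkCost d' _ Q hG).trans (walkCost_le ?_ ?_)
  · have := walkCost_nonneg dist P Q F
    positivity
  intro p hp
  obtain ⟨q, hq, rfl⟩ := List.mem_map.1 ((List.destutter_sublist _ _).subset hp)
  calc d' (P (S.getD (predIdx S q.1) 0)) (Q q.2)
      ≤ K * dist (P (S.getD (predIdx S q.1) 0)) (Q q.2) := hd' _ _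
    _ ≤ K * (μ + walkCost dist P Q F) := by
      gcongr
      exact (dist_triangle _ (P q.1) _).trans (add_le_add
        (hS.dist_getD_predIdx_le hμ (hF.2.2.2.2 q hq).1) (le_walkCost dist P Q hq))

lemma IsSimplification.dF_le_mul_dF (hS : IsSimplification dist P n μ S) (hμ : 0 ≤ μ)
    (hK : 0 < K) (hd' : ∀ x y, d' x y ≤ K * dist x y) (hm : 0 < m) :
    dF d' (subCurve P S) S.length Q m ≤ K * (μ + dF dist P n Q m) := by
  rw [← div_le_iff₀' hK, ← sub_le_iff_le_add']
  exact le_dF hS.pos hm fun F hF =>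
    sub_le_iff_le_add'.2 ((div_le_iff₀' hK).2 (hS.dF_le_mul_walkCost hμ hK.le hd' hF))

end Simplification

theorem decision_no_general {X : Type*} [MetricSpace X] (d' : X → X → ℝ)
    (ε ρ ρstar μ : ℝ) (hε0 : 0 < ε) (hε1 : ε < 1) (hρ : 0 < ρ)
    (hρstar : ρstar = (1 + ε / 2) * ρ) (hμ0 : 0 ≤ μ) (hμ : μ ≤ ε * ρ / 6)
    (hd : ∀ x y, (1 - ε / 6) * dist x y ≤ d' x y ∧ d' x y ≤ (1 + ε / 6) * dist x y)
    (P : ℕ → X) (n : ℕ)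
    (Q : ℕ → X) (m : ℕ) (hm : 0 < m)
    (S : List ℕ) (hS : IsSimplification dist P n μ S)
    (h : dF dist P n Q m ≤ ρ) :
    dF d' (subCurve P S) S.length Q m ≤ ρstar := by
  have hK : 0 < 1 + ε / 6 := by positivity
  calc dF d' (subCurve P S) S.length Q m ≤ (1 + ε / 6) * (μ + dF dist P n Q m) :=
        hS.dF_le_mul_dF hμ0 hK (fun x y => (hd x y).2) hm
    _ ≤ (1 + ε / 6) * (ε * ρ / 6 + ρ) := by gcongr
    _ ≤ ρstar := by
      rw [hρstar]
      nlinarith [mul_pos hε0 hρ]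

/-- if `D_F(P, Q) ≤ ρ` then the perceived discrete Fréchet distance
between the `μ`-simplification `P^μ` and `Q` is at most `ρ* = (1+ε/2)ρ`
(with `μ ≤ ερ/6` and a `(1 ± ε/6)`-perceived distance `d'`). -/
theorem decision_no {X : Type*} [MetricSpace X] (d' : X → X → ℝ)
    (ε ρ ρstar μ : ℝ) (hε0 : 0 < ε) (hε1 : ε < 1) (hρ : 0 < ρ)
    (hρstar : ρstar = (1 + ε / 2) * ρ) (hμ0 : 0 ≤ μ) (hμ : μ ≤ ε * ρ / 6)
    (hd : ∀ x y, (1 - ε / 6) * dist x y ≤ d' x y ∧ d' x y ≤ (1 + ε / 6) * dist x y)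
    (P : ℕ → X) (n : ℕ) (hn : 0 < n)
    (Q : ℕ → X) (m : ℕ) (hm : 0 < m)
    (S : List ℕ) (hS : IsSimplification dist P n μ S)
    (h : dF dist P n Q m ≤ ρ) :
    dF d' (subCurve P S) S.length Q m ≤ ρstar :=
  decision_no_general d' ε ρ ρstar μ hε0 hε1 hρ hρstar hμ0 hμ hd P n Q m hm S hS h

end Frechet
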